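/- Best rational approximants to even functions are even: Let B > 0, let f : [−B,B] → ℝ be continuous with f(−x) = f(x) for all x ∈ [−B,B], and let m, n be nonnegative integers. If R is a best approximant of type (n,m) to f on [−B,B], then R(−x) = R(x) for every x ∈ [−B,B]. -/

import Mathlib

/-- A rational function of type (n,m) on [A,B]. -/
def IsRatFun (A B : ℝ) (n m : ℕ) (R : ℝ → ℝ) : Prop :=
  ∃ P Q : Polynomial ℝ, P.natDegree ≤ n ∧ Q.natDegree ≤ m ∧
    (∀ x ∈ Set.Icc A B, Q.eval x ≠ 0) ∧
    ∀ x ∈ Set.Icc A B, R x = P.eval x / Q.eval x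

/-- R is a best approximant of type (n,m) to f on [A,B]. -/
def IsBestApprox (A B : ℝ) (n m : ℕ) (f R : ℝ → ℝ) : Prop :=
  IsRatFun A B n m R ∧
    ∀ S : ℝ → ℝ, IsRatFun A B n m S →
      (⨆ y : Set.Icc A B, |f y.1 - R y.1|) ≤ ⨆ y : Set.Icc A B, |f y.1 - S y.1|

/-! Since `f` is even, `x ↦ R (-x)` approximates `f` as well as `R` does, and so does the mediant
`W x = (P x + P (-x)) / (Q x + Q (-x))` of the two, where `R = P / Q` with `Q > 0`: pointwise,
`f - W` is a convex combination of `f x - R x` and `f x - R (-x)`. Hence the error of `W` is at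
most the minimal error `E`, and it equals `E` only where `R x = R (-x) = W x`, that is, at roots
of `P * Q₁ - P₁ * Q` for the reduced form `W = P₁ / Q₁`. If `R ≠ W` this polynomial is nonzero,
so the interpolant of the error at these extremal points has degree below its degree and can be
written as `p * Q₁ - q * P₁` with `deg p ≤ n`, `deg q ≤ m`. Moving `W` to
`(P₁ + ε p) / (Q₁ + ε q)` then pushes the error below `E` everywhere, contradicting optimality.
So `R = W`, which is even. -/

open Polynomial Set

theorem sub_mediant_eq (y a c : ℝ) {b d : ℝ} (hb : 0 < b) (hd : 0 < d) :
    y - (a + c) / (b + d) = (b * (y - a / b) + d * (y - c / d)) / (b + d) := by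
  field_simp
  ring

theorem abs_sub_mediant_le {y a b c d E : ℝ} (hb : 0 < b) (hd : 0 < d)
    (h₁ : |y - a / b| ≤ E) (h₂ : |y - c / d| ≤ E) : |y - (a + c) / (b + d)| ≤ E := by
  rw [sub_mediant_eq y a c hb hd, abs_div, abs_of_pos (add_pos hb hd),
    div_le_iff₀ (add_pos hb hd)]
  calc |b * (y - a / b) + d * (y - c / d)| ≤ |b * (y - a / b)| + |d * (y - c / d)| :=
        abs_add_le _ _
    _ = b * |y - a / b| + d * |y - c / d| := by rw [abs_mul, abs_mul, abs_of_pos hb, abs_of_pos hd]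
    _ ≤ E * (b + d) := by nlinarith

theorem eq_of_abs_mul_add_mul_eq {u v b d E : ℝ} (hb : 0 < b) (hd : 0 < d) (hu : |u| ≤ E)
    (hv : |v| ≤ E) (h : |b * u + d * v| = (b + d) * E) : u = v := by
  rw [abs_le] at hu hv
  rcases abs_choice (b * u + d * v) with h' | h' <;> rw [h'] at h
  · have hbu : b * (E - u) = 0 := by nlinarith
    have hdv : d * (E - v) = 0 := by nlinarith
    linarith [(mul_eq_zero.1 hbu).resolve_left hb.ne', (mul_eq_zero.1 hdv).resolve_left hd.ne']
  · have hbu : b * (E + u) = 0 := by nlinarith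
    have hdv : d * (E + v) = 0 := by nlinarith
    linarith [(mul_eq_zero.1 hbu).resolve_left hb.ne', (mul_eq_zero.1 hdv).resolve_left hd.ne']

theorem mediant_eq_left_of_abs_sub_mediant_eq {y a b c d E : ℝ} (hb : 0 < b) (hd : 0 < d)
    (h₁ : |y - a / b| ≤ E) (h₂ : |y - c / d| ≤ E) (h : |y - (a + c) / (b + d)| = E) :
    (a + c) / (b + d) = a / b := by
  rw [sub_mediant_eq y a c hb hd, abs_div, abs_of_pos (add_pos hb hd),
    div_eq_iff (add_pos hb hd).ne'] at h
  have hac := eq_of_abs_mul_add_mul_eq hb hd h₁ h₂ (h.trans (mul_comm _ _))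
  rw [sub_right_inj, div_eq_div_iff hb.ne' hd.ne'] at hac
  rw [div_eq_div_iff (add_pos hb hd).ne' hb.ne']
  linear_combination -hac

theorem abs_sub_lt_of_mul_pos {a b E : ℝ} (hab : 0 < a * b) (ha : |a| ≤ E) (hb : |b| < E) :
    |a - b| < E := by
  rw [abs_le] at ha
  rw [abs_lt] at hb ⊢
  rcases lt_or_gt_of_ne (left_ne_zero_of_mul hab.ne') with h | h
  · have : b < 0 := by nlinarith
    constructor <;> linarith
  · have : 0 < b := by nlinarith
    constructor <;> linarith

theorem Set.neg_mem_Icc_neg {α : Type*} [AddCommGroup α] [PartialOrder α] [IsOrderedAddMonoid α]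
    {B x : α} (hx : x ∈ Icc (-B) B) : -x ∈ Icc (-B) B :=
  ⟨neg_le_neg hx.2, neg_le.1 hx.1⟩

theorem IsPreconnected.forall_pos_or_forall_neg {X : Type*} [TopologicalSpace X] {s : Set X}
    (hs : IsPreconnected s) {g : X → ℝ} (hg : ContinuousOn g s) (h0 : ∀ x ∈ s, g x ≠ 0) :
    (∀ x ∈ s, 0 < g x) ∨ ∀ x ∈ s, g x < 0 := by
  by_contra! hc
  obtain ⟨⟨x, hx, hgx⟩, y, hy, hgy⟩ := hc
  obtain ⟨z, hz, hgz⟩ := hs.intermediate_value hx hy hg ⟨hgx, hgy⟩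
  exact h0 z hz hgz

theorem IsCompact.le_iSup_of_continuousOn {X : Type*} [TopologicalSpace X] {K : Set X}
    (hK : IsCompact K) {φ : X → ℝ} (hφ : ContinuousOn φ K) {x : X} (hx : x ∈ K) :
    φ x ≤ ⨆ y : K, φ y :=
  le_ciSup (f := fun y : K => φ y) (by rw [← image_eq_range]; exact hK.bddAbove_image hφ) ⟨x, hx⟩

theorem IsCompact.iSup_lt_of_continuousOn {X : Type*} [TopologicalSpace X] {K : Set X}
    (hK : IsCompact K) (hne : K.Nonempty) {φ : X → ℝ} (hφ : ContinuousOn φ K) {E : ℝ}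
    (h : ∀ x ∈ K, φ x < E) : ⨆ y : K, φ y < E := by
  rw [← sSup_image']
  exact (hK.sSup_lt_iff_of_continuous hne hφ E).2 h

theorem IsCompact.exists_forall_abs_sub_mul_lt {X : Type*} [TopologicalSpace X] {s : Set X}
    (hs : IsCompact s) {e g : X → ℝ} (he : ContinuousOn e s) (hg : ContinuousOn g s) {E : ℝ}
    (hE : 0 < E) (heE : ∀ x ∈ s, |e x| ≤ E) (hsign : ∀ x ∈ s, |e x| = E → 0 < g x * e x) :
    ∃ t₀ > 0, ∀ x ∈ s, ∀ t ∈ Ioc 0 t₀, |e x - t * g x| < E := by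
  -- wherever moving along `g` does not reduce `|e|`, the error stays a margin `d` below `E`
  obtain ⟨d, hd, hmargin⟩ : ∃ d, 0 < d ∧ ∀ x ∈ s, d ≤ max (E - |e x|) (g x * e x) := by
    refine hs.exists_forall_le' (f := fun x => max (E - |e x|) (g x * e x))
      ((continuousOn_const.sub he.abs).sup (hg.mul he)) fun x hx => ?_
    rcases (heE x hx).lt_or_eq with h | h
    · exact lt_max_of_lt_left (by linarith)
    · exact lt_max_of_lt_right (hsign x hx h)
  obtain ⟨G, hG⟩ := hs.exists_bound_of_continuousOn hg
  refine ⟨min d E / (|G| + 1), by positivity, fun x hx t ht => ?_⟩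
  have htg : |t * g x| < min d E := by
    rw [abs_mul, abs_of_pos ht.1]
    calc t * |g x| ≤ min d E / (|G| + 1) * |G| :=
          mul_le_mul ht.2 ((hG x hx).trans (le_abs_self G)) (abs_nonneg _) (by positivity)
      _ < min d E := by
        rw [div_mul_eq_mul_div, div_lt_iff₀ (by positivity)]
        nlinarith [lt_min hd hE]
  rcases le_or_gt (g x * e x) 0 with hge | hge
  · have hed : d ≤ E - |e x| := (le_max_iff.1 (hmargin x hx)).resolve_right (by linarith)
    calc |e x - t * g x| ≤ |e x| + |t * g x| := abs_sub _ _
      _ < E := by linarith [min_le_left d E]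
  · exact abs_sub_lt_of_mul_pos (by nlinarith [ht.1]) (heE x hx) (htg.trans_le (min_le_right _ _))

theorem IsCompact.exists_pos_forall_div_mul_add_mul_le {X : Type*} [TopologicalSpace X]
    {s : Set X} (hs : IsCompact s) {D q : X → ℝ} (hD : ContinuousOn D s) (hq : ContinuousOn q s)
    (hDpos : ∀ x ∈ s, 0 < D x) {t₀ : ℝ} (ht₀ : 0 < t₀) :
    ∃ ε > 0, ∀ x ∈ s, 0 < D x + ε * q x ∧ ε / (D x * (D x + ε * q x)) ≤ t₀ := by
  obtain ⟨κ, hκ, hDκ⟩ := hs.exists_forall_le' hD hDpos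
  obtain ⟨M, hM⟩ := hs.exists_bound_of_continuousOn hq
  set ε := min (κ / (2 * (|M| + 1))) (t₀ * κ ^ 2 / 2)
  refine ⟨ε, by positivity, fun x hx => ?_⟩
  have hεq : |ε * q x| ≤ κ / 2 := by
    rw [abs_mul, abs_of_pos (by positivity : 0 < ε)]
    calc ε * |q x| ≤ κ / (2 * (|M| + 1)) * (|M| + 1) :=
          mul_le_mul (min_le_left _ _)
            (by linarith [Real.norm_eq_abs (q x) ▸ hM x hx, le_abs_self M]) (abs_nonneg _)
            (by positivity)
      _ = κ / 2 := by field_simp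
  have hDε : κ / 2 ≤ D x + ε * q x := by linarith [neg_abs_le (ε * q x), hDκ x hx]
  refine ⟨by linarith, ?_⟩
  rw [div_le_iff₀ (mul_pos (hDpos x hx) (by linarith))]
  calc ε ≤ t₀ * κ ^ 2 / 2 := min_le_right _ _
    _ = t₀ * (κ * (κ / 2)) := by ring
    _ ≤ t₀ * (D x * (D x + ε * q x)) :=
      mul_le_mul_of_nonneg_left (mul_le_mul (hDκ x hx) hDε (by positivity) (hDpos x hx).le) ht₀.le

namespace Polynomial

variable {K : Type*} [Field K]

theorem exists_mul_sub_mul_eq_of_natDegree_lt {a b h : K[X]} {n m : ℕ} (hab : IsCoprime a b)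
    (hb : b ≠ 0) (ha : a.natDegree ≤ n) (hbm : b.natDegree ≤ m)
    (hh : h.natDegree < n + b.natDegree) :
    ∃ p q : K[X], p.natDegree ≤ n ∧ q.natDegree ≤ m ∧ p * b - q * a = h := by
  obtain ⟨u, v, huv⟩ := hab
  -- reducing the Bézout solution `(h * v, -(h * u))` modulo `b` keeps the degrees in range
  set r := -(h * u) % b
  set p := h * v - -(h * u) / b * a
  have hpr : p * b - r * a = h := by
    have := EuclideanDomain.div_add_mod (-(h * u)) b
    linear_combination (-a) * this + h * huv
  have hr : r = 0 ∨ r.natDegree < b.natDegree := by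
    rcases eq_or_ne r 0 with hr0 | hr0
    · exact .inl hr0
    · exact .inr (natDegree_lt_natDegree hr0 (degree_mod_lt _ hb))
  have hrm : r.natDegree ≤ m := by
    rcases hr with hr | hr
    · simp [hr]
    · omega
  refine ⟨p, r, ?_, hrm, hpr⟩
  rcases eq_or_ne p 0 with hp0 | hp0
  · simp [hp0]
  have hra : (r * a).natDegree < n + b.natDegree := by
    rcases hr with hr | hr
    · simp [hr]; omega
    · exact natDegree_mul_le.trans_lt (by omega)
  have : p.natDegree + b.natDegree < n + b.natDegree := by
    rw [← natDegree_mul hp0 hb, sub_eq_iff_eq_add.1 hpr]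
    exact (natDegree_add_le _ _).trans_lt (max_lt hh hra)
  omega

theorem exists_mul_sub_mul_eq_of_degree_lt {P Q P₁ Q₁ h : K[X]} {n m : ℕ}
    (hcop : IsCoprime P₁ Q₁) (hP₁ : P₁.natDegree ≤ n) (hQ₁ : Q₁.natDegree ≤ m)
    (hP : P.natDegree ≤ n) (hQ : Q.natDegree ≤ m) (hh : h.degree < (P * Q₁ - P₁ * Q).degree) :
    ∃ p q : K[X], p.natDegree ≤ n ∧ q.natDegree ≤ m ∧ p * Q₁ - q * P₁ = h := by
  rcases eq_or_ne h 0 with rfl | h0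
  · exact ⟨0, 0, by simp, by simp, by simp⟩
  have hN : P * Q₁ - P₁ * Q ≠ 0 := by
    rintro hN
    rw [hN, degree_zero] at hh
    exact not_lt_bot hh
  have hhN := natDegree_lt_natDegree h0 hh
  have hPQ₁ : (P * Q₁).natDegree ≤ n + Q₁.natDegree := natDegree_mul_le.trans (by omega)
  have hP₁Q : (P₁ * Q).natDegree ≤ m + P₁.natDegree := natDegree_mul_le.trans (by omega)
  have key : (Q₁ ≠ 0 ∧ h.natDegree < n + Q₁.natDegree) ∨
      (P₁ ≠ 0 ∧ h.natDegree < m + P₁.natDegree) := by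
    by_cases hP₁0 : P₁ = 0
    · refine .inl ⟨?_, ?_⟩
      · rintro rfl
        exact not_isCoprime_zero_zero (hP₁0 ▸ hcop)
      · simp only [hP₁0, zero_mul, sub_zero] at hhN
        omega
    by_cases hQ₁0 : Q₁ = 0
    · refine .inr ⟨hP₁0, ?_⟩
      simp only [hQ₁0, mul_zero, zero_sub, natDegree_neg] at hhN
      omega
    rcases lt_max_iff.1 (hhN.trans_le ((natDegree_sub_le _ _).trans (max_le_max hPQ₁ hP₁Q)))
      with hlt | hlt
    · exact .inl ⟨hQ₁0, hlt⟩
    · exact .inr ⟨hP₁0, hlt⟩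
  rcases key with ⟨hQ₁0, hlt⟩ | ⟨hP₁0, hlt⟩
  · exact exists_mul_sub_mul_eq_of_natDegree_lt hcop hQ₁0 hP₁ hQ₁ hlt
  · obtain ⟨q, p, hq, hp, hqp⟩ := exists_mul_sub_mul_eq_of_natDegree_lt hcop.symm hP₁0 hQ₁ hP₁
      (by rwa [natDegree_neg] : (-h).natDegree < m + P₁.natDegree)
    exact ⟨p, q, hp, hq, by linear_combination -hqp⟩

theorem exists_degree_lt_eval_eq_of_isRoot {N : K[X]} (hN : N ≠ 0) (v : K → K) :
    ∃ h : K[X], h.degree < N.degree ∧ ∀ z, N.IsRoot z → h.eval z = v z := by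
  classical
  have hinj : InjOn id (N.roots.toFinset : Set K) := injOn_id _
  refine ⟨Lagrange.interpolate N.roots.toFinset id v, ?_, fun z hz => ?_⟩
  · calc _ < (N.roots.toFinset.card : WithBot ℕ) := Lagrange.degree_interpolate_lt v hinj
      _ ≤ N.natDegree := by
        exact_mod_cast (Multiset.toFinset_card_le _).trans (card_roots' N)
      _ = N.degree := (degree_eq_natDegree hN).symm
  · exact Lagrange.eval_interpolate_at_node v hinj (by simpa [mem_roots hN] using hz)

theorem natDegree_add_comp_neg_X_le (P : K[X]) : (P + P.comp (-X)).natDegree ≤ P.natDegree :=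
  (natDegree_add_le _ _).trans (max_le le_rfl (by simp [natDegree_comp]))

theorem isRoot_mul_sub_mul_iff {P Q P₁ Q₁ : K[X]} {x : K} (hQ : Q.eval x ≠ 0)
    (hQ₁ : Q₁.eval x ≠ 0) :
    (P * Q₁ - P₁ * Q).IsRoot x ↔ P.eval x / Q.eval x = P₁.eval x / Q₁.eval x := by
  rw [div_eq_div_iff hQ hQ₁, IsRoot, eval_sub, eval_mul, eval_mul, sub_eq_zero]

end Polynomial

theorem Polynomial.exists_isCoprime_eval_pos {s : Set ℝ} (hs : IsPreconnected s) {P Q : ℝ[X]}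
    (hQ0 : Q ≠ 0) (hQ : ∀ x ∈ s, Q.eval x ≠ 0) :
    ∃ P₁ Q₁ : ℝ[X], IsCoprime P₁ Q₁ ∧ P₁.natDegree ≤ P.natDegree ∧
      Q₁.natDegree ≤ Q.natDegree ∧ (∀ x ∈ s, 0 < Q₁.eval x) ∧
      ∀ x ∈ s, P₁.eval x / Q₁.eval x = P.eval x / Q.eval x := by
  set g := GCDMonoid.gcd P Q
  have hg : g ≠ 0 := gcd_ne_zero_of_right hQ0
  have hPg : g * (P / g) = P := EuclideanDomain.mul_div_cancel' hg (gcd_dvd_left _ _)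
  have hQg : g * (Q / g) = Q := EuclideanDomain.mul_div_cancel' hg (gcd_dvd_right _ _)
  have hdeg {F : ℝ[X]} (hF : g * (F / g) = F) : (F / g).natDegree ≤ F.natDegree := by
    rcases eq_or_ne (F / g) 0 with h0 | h0
    · simp [h0]
    · have := natDegree_mul hg h0
      rw [hF] at this
      omega
  have hsplit : ∀ x ∈ s, g.eval x ≠ 0 ∧ (Q / g).eval x ≠ 0 := fun x hx =>
    mul_ne_zero_iff.1 (by rw [← eval_mul, hQg]; exact hQ x hx)
  have hdiv : ∀ x ∈ s, (P / g).eval x / (Q / g).eval x = P.eval x / Q.eval x := fun x hx => by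
    conv_rhs => rw [← hPg, ← hQg, eval_mul, eval_mul, mul_div_mul_left _ _ (hsplit x hx).1]
  rcases hs.forall_pos_or_forall_neg (Q / g).continuousOn (fun x hx => (hsplit x hx).2)
    with hpos | hneg
  · exact ⟨P / g, Q / g, isCoprime_div_gcd_div_gcd hQ0, hdeg hPg, hdeg hQg, hpos, hdiv⟩
  · refine ⟨-(P / g), -(Q / g), (isCoprime_div_gcd_div_gcd hQ0).neg_neg, by simpa using hdeg hPg,
      by simpa using hdeg hQg, fun x hx => by simpa using hneg x hx, fun x hx => ?_⟩
    rw [eval_neg, eval_neg, neg_div_neg_eq, hdiv x hx]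

theorem exists_isCoprime_even_of_abs_sub_le {B E : ℝ} {f : ℝ → ℝ}
    (hfeven : ∀ x ∈ Icc (-B) B, f (-x) = f x) {P Q : ℝ[X]}
    (hQpos : ∀ x ∈ Icc (-B) B, 0 < Q.eval x)
    (hle : ∀ x ∈ Icc (-B) B, |f x - P.eval x / Q.eval x| ≤ E) (hne : (Icc (-B) B).Nonempty) :
    ∃ P₁ Q₁ : ℝ[X], IsCoprime P₁ Q₁ ∧ P₁.natDegree ≤ P.natDegree ∧
      Q₁.natDegree ≤ Q.natDegree ∧ (∀ x ∈ Icc (-B) B, 0 < Q₁.eval x) ∧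
      (∀ x ∈ Icc (-B) B, P₁.eval (-x) / Q₁.eval (-x) = P₁.eval x / Q₁.eval x) ∧
      (∀ x ∈ Icc (-B) B, |f x - P₁.eval x / Q₁.eval x| ≤ E) ∧
      ∀ x ∈ Icc (-B) B, |f x - P₁.eval x / Q₁.eval x| = E → (P * Q₁ - P₁ * Q).IsRoot x := by
  have hQsymm : ∀ x ∈ Icc (-B) B, 0 < (Q + Q.comp (-X)).eval x := fun x hx => by
    simpa using add_pos (hQpos x hx) (hQpos _ (neg_mem_Icc_neg hx))
  obtain ⟨x₀, hx₀⟩ := hne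
  obtain ⟨P₁, Q₁, hcop, hP₁, hQ₁, hQ₁pos, hW⟩ := exists_isCoprime_eval_pos isPreconnected_Icc
    (P := P + P.comp (-X)) (fun h => (hQsymm x₀ hx₀).ne' (by simp [h]))
    fun x hx => (hQsymm x hx).ne'
  simp only [eval_add, eval_comp, eval_neg, eval_X] at hW
  have hle' : ∀ x ∈ Icc (-B) B, |f x - P.eval (-x) / Q.eval (-x)| ≤ E := fun x hx =>
    hfeven x hx ▸ hle _ (neg_mem_Icc_neg hx)
  refine ⟨P₁, Q₁, hcop, hP₁.trans (natDegree_add_comp_neg_X_le P),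
    hQ₁.trans (natDegree_add_comp_neg_X_le Q), hQ₁pos, fun x hx => ?_, fun x hx => ?_,
    fun x hx hext => ?_⟩
  · rw [hW _ hx, hW _ (neg_mem_Icc_neg hx), neg_neg, add_comm (P.eval _), add_comm (Q.eval _)]
  · rw [hW x hx]
    exact abs_sub_mediant_le (hQpos x hx) (hQpos _ (neg_mem_Icc_neg hx)) (hle x hx) (hle' x hx)
  · rw [isRoot_mul_sub_mul_iff (hQpos x hx).ne' (hQ₁pos x hx).ne']
    rw [hW x hx] at hext ⊢
    exact (mediant_eq_left_of_abs_sub_mediant_eq (hQpos x hx) (hQpos _ (neg_mem_Icc_neg hx))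
      (hle x hx) (hle' x hx) hext).symm

theorem IsRatFun.continuousOn {A B : ℝ} {n m : ℕ} {R : ℝ → ℝ} (hR : IsRatFun A B n m R) :
    ContinuousOn R (Icc A B) := by
  obtain ⟨P, Q, -, -, hQ, hRPQ⟩ := hR
  exact (P.continuousOn.div Q.continuousOn hQ).congr hRPQ

theorem IsRatFun.exists_eval_pos {A B : ℝ} {n m : ℕ} {R : ℝ → ℝ} (hR : IsRatFun A B n m R)
    (hne : (Icc A B).Nonempty) :
    ∃ P Q : ℝ[X], P.natDegree ≤ n ∧ Q.natDegree ≤ m ∧ (∀ x ∈ Icc A B, 0 < Q.eval x) ∧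
      ∀ x ∈ Icc A B, R x = P.eval x / Q.eval x := by
  obtain ⟨P₀, Q₀, hP₀, hQ₀, hQ₀ne, hR₀⟩ := hR
  obtain ⟨x, hx⟩ := hne
  obtain ⟨P, Q, -, hP, hQ, hQpos, hPQ⟩ := exists_isCoprime_eval_pos isPreconnected_Icc
    (P := P₀) (fun h => hQ₀ne x hx (by simp [h])) hQ₀ne
  exact ⟨P, Q, hP.trans hP₀, hQ.trans hQ₀, hQpos, fun x hx => (hR₀ x hx).trans (hPQ x hx).symm⟩

theorem exists_isRatFun_abs_sub_lt {A B E : ℝ} {n m : ℕ} {f : ℝ → ℝ}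
    (hf : ContinuousOn f (Icc A B)) {P₁ Q₁ p q : ℝ[X]} (hP₁ : P₁.natDegree ≤ n)
    (hQ₁ : Q₁.natDegree ≤ m) (hp : p.natDegree ≤ n) (hq : q.natDegree ≤ m)
    (hQ₁pos : ∀ x ∈ Icc A B, 0 < Q₁.eval x) (hE : 0 < E)
    (hle : ∀ x ∈ Icc A B, |f x - P₁.eval x / Q₁.eval x| ≤ E)
    (hsign : ∀ x ∈ Icc A B, |f x - P₁.eval x / Q₁.eval x| = E →
      0 < (p * Q₁ - q * P₁).eval x * (f x - P₁.eval x / Q₁.eval x)) :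
    ∃ V, IsRatFun A B n m V ∧ ∀ x ∈ Icc A B, |f x - V x| < E := by
  have hW : ContinuousOn (fun x => P₁.eval x / Q₁.eval x) (Icc A B) :=
    P₁.continuousOn.div Q₁.continuousOn fun x hx => (hQ₁pos x hx).ne'
  obtain ⟨t₀, ht₀, hdescent⟩ := isCompact_Icc.exists_forall_abs_sub_mul_lt (hf.sub hW)
    (p * Q₁ - q * P₁).continuousOn hE hle hsign
  obtain ⟨ε, hε, hsmall⟩ := isCompact_Icc.exists_pos_forall_div_mul_add_mul_le Q₁.continuousOn
    q.continuousOn hQ₁pos ht₀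
  refine ⟨fun x => (P₁ + C ε * p).eval x / (Q₁ + C ε * q).eval x,
    ⟨P₁ + C ε * p, Q₁ + C ε * q, ?_, ?_, fun x hx => ?_, fun x hx => rfl⟩, fun x hx => ?_⟩
  · exact (natDegree_add_le _ _).trans (max_le hP₁ ((natDegree_C_mul_le _ _).trans hp))
  · exact (natDegree_add_le _ _).trans (max_le hQ₁ ((natDegree_C_mul_le _ _).trans hq))
  · simpa using (hsmall x hx).1.ne'
  obtain ⟨hQεpos, hstep⟩ := hsmall x hx
  have hQ₁x := hQ₁pos x hx
  have hmove : f x - (P₁ + C ε * p).eval x / (Q₁ + C ε * q).eval x =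
      (f x - P₁.eval x / Q₁.eval x) -
        ε / (Q₁.eval x * (Q₁.eval x + ε * q.eval x)) * (p * Q₁ - q * P₁).eval x := by
    simp only [eval_add, eval_mul, eval_C, eval_sub]
    field_simp
    ring
  rw [hmove]
  exact hdescent x hx _ ⟨div_pos hε (mul_pos hQ₁x hQεpos), hstep⟩

theorem exists_isRatFun_abs_sub_lt_of_extremal_isRoot {A B E : ℝ} {n m : ℕ} {f : ℝ → ℝ}
    (hf : ContinuousOn f (Icc A B)) {P Q P₁ Q₁ : ℝ[X]} (hP : P.natDegree ≤ n)
    (hQ : Q.natDegree ≤ m) (hP₁ : P₁.natDegree ≤ n) (hQ₁ : Q₁.natDegree ≤ m)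
    (hcop : IsCoprime P₁ Q₁) (hQ₁pos : ∀ x ∈ Icc A B, 0 < Q₁.eval x) (hE : 0 < E)
    (hle : ∀ x ∈ Icc A B, |f x - P₁.eval x / Q₁.eval x| ≤ E) (hN : P * Q₁ - P₁ * Q ≠ 0)
    (hroot : ∀ x ∈ Icc A B, |f x - P₁.eval x / Q₁.eval x| = E → (P * Q₁ - P₁ * Q).IsRoot x) :
    ∃ V, IsRatFun A B n m V ∧ ∀ x ∈ Icc A B, |f x - V x| < E := by
  obtain ⟨h, hdeg, hinterp⟩ :=
    exists_degree_lt_eval_eq_of_isRoot hN fun x => f x - P₁.eval x / Q₁.eval x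
  obtain ⟨p, q, hp, hq, hpq⟩ := exists_mul_sub_mul_eq_of_degree_lt hcop hP₁ hQ₁ hP hQ hdeg
  refine exists_isRatFun_abs_sub_lt hf hP₁ hQ₁ hp hq hQ₁pos hE hle fun x hx hext => ?_
  rw [hpq, hinterp x (hroot x hx hext)]
  exact mul_self_pos.2 fun h0 => hE.ne' (by rw [← hext, h0, abs_zero])

theorem best_approx_of_even_is_even_general
    (B : ℝ) (f : ℝ → ℝ) (hf : ContinuousOn f (Set.Icc (-B) B))
    (hfeven : ∀ x ∈ Set.Icc (-B) B, f (-x) = f x)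
    (m n : ℕ) (R : ℝ → ℝ) (hR : IsBestApprox (-B) B n m f R) :
    ∀ x ∈ Set.Icc (-B) B, R (-x) = R x := by
  intro x₀ hx₀
  obtain ⟨hRrat, hbest⟩ := hR
  obtain ⟨P, Q, hP, hQ, hQpos, hRPQ⟩ := hRrat.exists_eval_pos ⟨x₀, hx₀⟩
  set E := ⨆ y : Icc (-B) B, |f y - R y|
  have hRE : ∀ x ∈ Icc (-B) B, |f x - P.eval x / Q.eval x| ≤ E := fun x hx =>
    hRPQ x hx ▸ isCompact_Icc.le_iSup_of_continuousOn (hf.sub hRrat.continuousOn).abs hx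
  obtain ⟨P₁, Q₁, hcop, hP₁, hQ₁, hQ₁pos, hWeven, hWle, hroot⟩ :=
    exists_isCoprime_even_of_abs_sub_le hfeven hQpos hRE ⟨x₀, hx₀⟩
  have hRW {x : ℝ} (hx : x ∈ Icc (-B) B) (hN : (P * Q₁ - P₁ * Q).IsRoot x) :
      R x = P₁.eval x / Q₁.eval x :=
    (hRPQ x hx).trans ((isRoot_mul_sub_mul_iff (hQpos x hx).ne' (hQ₁pos x hx).ne').1 hN)
  by_cases hN : ∀ x ∈ Icc (-B) B, (P * Q₁ - P₁ * Q).IsRoot x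
  · have hx₀' := neg_mem_Icc_neg hx₀
    rw [hRW hx₀' (hN _ hx₀'), hRW hx₀ (hN _ hx₀), hWeven x₀ hx₀]
  push Not at hN
  obtain ⟨x₁, hx₁, hN₁⟩ := hN
  have hE : 0 < E := ((abs_nonneg _).trans (hWle x₁ hx₁)).lt_of_ne fun h0 =>
    hN₁ (hroot x₁ hx₁ (le_antisymm (hWle x₁ hx₁) (h0 ▸ abs_nonneg _)))
  obtain ⟨V, hV, hVlt⟩ := exists_isRatFun_abs_sub_lt_of_extremal_isRoot hf hP hQ
    (hP₁.trans hP) (hQ₁.trans hQ) hcop hQ₁pos hE hWle (fun h => hN₁ (by simp [h])) hroot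
  exact ((hbest V hV).not_gt
    (isCompact_Icc.iSup_lt_of_continuousOn ⟨x₀, hx₀⟩ (hf.sub hV.continuousOn).abs hVlt)).elim

/-- Best rational approximants to even functions are even. -/
theorem best_approx_of_even_is_even
    (B : ℝ) (hB : 0 < B) (f : ℝ → ℝ) (hf : ContinuousOn f (Set.Icc (-B) B))
    (hfeven : ∀ x ∈ Set.Icc (-B) B, f (-x) = f x)
    (m n : ℕ) (R : ℝ → ℝ) (hR : IsBestApprox (-B) B n m f R) :
    ∀ x ∈ Set.Icc (-B) B, R (-x) = R x :=
  best_approx_of_even_is_even_general B f hf hfeven m n R hR
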